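/- arXiv:1304.3611 — 6 statements merged into one kernel-verified Lean document; each statement's English description precedes it below -/
import Mathlib

section
/- For every commutative ring R, all elements y, z ∈ R, and all integers k, l ≥ 1, the product formula F_k(y,z) · F_l(y,z) = Σ_{t=0}^{min(k,l)−1} y^t · F_{k+l−1−2t}(y,z) holds. (This is the polynomial form of the Clebsch–Gordan decomposition of tensor products of indecomposable modules over a pointed rank one Hopf algebra of nilpotent type in the case k+l−1 ≤ n.) -/
/-!
The recurrence gives `F_{m+1} F_{n+1} = F_{m+n+1} + y F_m F_n`.
Iterating it `l` times from `F_k F_l` with `l ≤ k` produces the sum, and the iteration stops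
at `F_{k-l} F_0 = 0`.
-/

/-- The Dickson polynomials of the second kind: `dickF y z 1 = 1`, `dickF y z 2 = z`,
`dickF y z s = z * dickF y z (s-1) - y * dickF y z (s-2)` for `s ≥ 3`. -/
def dickF {R : Type*} [CommRing R] (y z : R) : ℕ → R
  | 0 => 0
  | 1 => 1
  | (s + 2) => z * dickF y z (s + 1) - y * dickF y z s

namespace dickF

variable {R : Type*} [CommRing R] (y z : R)

theorem add_two (s : ℕ) : dickF y z (s + 2) = z * dickF y z (s + 1) - y * dickF y z s := rfl

theorem succ_mul_succ (m : ℕ) : ∀ n : ℕ,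
    dickF y z (m + 1) * dickF y z (n + 1) = dickF y z (m + n + 1) + y * (dickF y z m * dickF y z n)
  | 0 => by simp [dickF]
  | 1 => by simp [dickF]; ring
  | n + 2 => by
    have h₀ := succ_mul_succ m n
    have h₁ := succ_mul_succ m (n + 1)
    rw [add_two y z (n + 1), show m + (n + 2) + 1 = m + n + 1 + 2 by ring, add_two y z (m + n + 1)]
    linear_combination z * h₁ - y * h₀ - y * dickF y z m * add_two y z n

theorem mul_of_le {k l : ℕ} (h : l ≤ k) :
    dickF y z k * dickF y z l = ∑ t ∈ Finset.range l, y ^ t * dickF y z (k + l - 1 - 2 * t) := by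
  induction l generalizing k with
  | zero => simp [dickF]
  | succ l ih =>
    obtain ⟨k, rfl⟩ : ∃ k', k = k' + 1 := ⟨k - 1, by omega⟩
    rw [succ_mul_succ, ih (by omega), Finset.sum_range_succ', add_comm (dickF y z _), Finset.mul_sum]
    refine congrArg₂ (· + ·) (Finset.sum_congr rfl fun t _ => ?_) (by simp [add_right_comm])
    rw [show k + 1 + (l + 1) - 1 - 2 * (t + 1) = k + l - 1 - 2 * t by omega]
    ring

end dickF

theorem stmt1_general {R : Type*} [CommRing R] (y z : R) (k l : ℕ) :
    dickF y z k * dickF y z l =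
      ∑ t ∈ Finset.range (min k l), y ^ t * dickF y z (k + l - 1 - 2 * t) := by
  rcases le_total l k with h | h
  · rw [min_eq_right h, dickF.mul_of_le y z h]
  · rw [min_eq_left h, mul_comm, Nat.add_comm k l, dickF.mul_of_le y z h]

theorem stmt1 {R : Type*} [CommRing R] (y z : R) (k l : ℕ) (hk : 1 ≤ k) (hl : 1 ≤ l) :
    dickF y z k * dickF y z l =
      ∑ t ∈ Finset.range (min k l), y ^ t * dickF y z (k + l - 1 - 2 * t) :=
  stmt1_general y z k l
end

section
/- Let n ≥ 2 and let 1 ≤ k, l ≤ n be integers with k + l − 1 ≥ n, and set r = k + l − 1 − n. Then in the polynomial ring ℤ[Y,Z] in two variables, the element F_k(Y,Z)·F_l(Y,Z) − ( Σ_{t=0}^{r} Y^t·F_n(Y,Z) + Σ_{t=r+1}^{min(k,l)−1} Y^t·F_{k+l−1−2t}(Y,Z) ) lies in the ideal generated by (1 + Y − Z)·F_n(Y,Z). (This is the polynomial form of the Clebsch–Gordan decomposition in the Green ring in the case k+l−1 ≥ n.) -/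
/-!
By induction from `F_{k+1} F_{m+1} = F_{k+m+1} + y F_k F_m` one gets the Clebsch–Gordan product
formula `F_k F_l = ∑_{t < min k l} y^t F_{k+l-1-2t}`. When `k + l - 1 = n + r`, its first `r + 1`
terms are the product formula for `F_{r+1} F_n`. Replacing each of them by `y^t F_n` gives
`F_{r+1}(y, 1 + y) F_n`, because `F_s(y, 1 + y) = 1 + y + ⋯ + y^{s-1}`. So the difference in question
is `(F_{r+1}(y, z) - F_{r+1}(y, 1 + y)) F_n`, and `z - (1 + y)` divides the first factor.
-/

open Finset

section
variable {R : Type*} [CommRing R] (y : R)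

theorem dickF_succ_mul_succ (z : R) (k m : ℕ) :
    dickF y z (k + 1) * dickF y z (m + 1) = dickF y z (k + m + 1) + y * dickF y z k * dickF y z m := by
  induction k generalizing m with
  | zero => simp [dickF]
  | succ k ih =>
    have h := ih (m + 1)
    rw [show k + (m + 1) + 1 = k + 1 + m + 1 by omega] at h
    simp only [dickF] at h ⊢
    linear_combination h

theorem dickF_mul_of_le (z : R) {k l : ℕ} (h : k ≤ l) :
    dickF y z k * dickF y z l = ∑ t ∈ range k, y ^ t * dickF y z (k + l - 1 - 2 * t) := by
  induction k generalizing l with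
  | zero => simp [dickF]
  | succ k ih =>
    obtain ⟨m, rfl⟩ : ∃ m, l = m + 1 := ⟨l - 1, by omega⟩
    rw [dickF_succ_mul_succ, mul_assoc, ih (by omega), mul_sum, sum_range_succ', add_comm]
    congr 1
    · exact sum_congr rfl fun t ht => by
        rw [pow_succ', mul_assoc, show k + m - 1 - 2 * t = k + 1 + (m + 1) - 1 - 2 * (t + 1) by
          have := mem_range.1 ht; omega]
    · simp [show k + 1 + (m + 1) - 1 = k + m + 1 by omega]

theorem dickF_one_add_self (s : ℕ) : dickF y (1 + y) s = ∑ t ∈ range s, y ^ t := by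
  induction s using Nat.twoStepInduction with
  | zero => rfl
  | one => simp [dickF]
  | more s ih ih' =>
    rw [dickF, ih, ih', sum_range_succ _ (s + 1), sum_range_succ]
    ring

theorem sub_dvd_dickF_sub (a b : R) (s : ℕ) : a - b ∣ dickF y a s - dickF y b s := by
  induction s using Nat.twoStepInduction with
  | zero => simp [dickF]
  | one => simp [dickF]
  | more s ih ih' =>
    have h : dickF y a (s + 2) - dickF y b (s + 2) =
        a * (dickF y a (s + 1) - dickF y b (s + 1)) + (a - b) * dickF y b (s + 1) -
          y * (dickF y a s - dickF y b s) := by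
      simp only [dickF]; ring
    rw [h]
    exact dvd_sub (dvd_add (ih'.mul_left a) (dvd_mul_right _ _)) (ih.mul_left y)

end

theorem stmt2_general (n k l : ℕ) (hk1 : 1 ≤ k) (hkn : k ≤ n) (hl1 : 1 ≤ l) (hln : l ≤ n)
    (h : n ≤ k + l - 1) (r : ℕ) (hr : r = k + l - 1 - n)
    (Y Z : MvPolynomial (Fin 2) ℤ) :
    dickF Y Z k * dickF Y Z l -
        ((∑ t ∈ Finset.range (r + 1), Y ^ t * dickF Y Z n) +
          ∑ t ∈ Finset.Ico (r + 1) (min k l), Y ^ t * dickF Y Z (k + l - 1 - 2 * t)) ∈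
      Ideal.span {(1 + Y - Z) * dickF Y Z n} := by
  have hprod : dickF Y Z k * dickF Y Z l =
      ∑ t ∈ range (min k l), Y ^ t * dickF Y Z (k + l - 1 - 2 * t) := by
    rcases le_total k l with hkl | hlk
    · rw [min_eq_left hkl, dickF_mul_of_le Y Z hkl]
    · rw [min_eq_right hlk, mul_comm, dickF_mul_of_le Y Z hlk, add_comm l k]
  have hhead : ∑ t ∈ range (r + 1), Y ^ t * dickF Y Z (k + l - 1 - 2 * t) =
      dickF Y Z (r + 1) * dickF Y Z n := by
    rw [dickF_mul_of_le Y Z (by omega : r + 1 ≤ n), show r + 1 + n - 1 = k + l - 1 by omega]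
  have hgeom : ∑ t ∈ range (r + 1), Y ^ t * dickF Y Z n = dickF Y (1 + Y) (r + 1) * dickF Y Z n := by
    rw [dickF_one_add_self, sum_mul]
  rw [Ideal.mem_span_singleton, hprod, ← sum_range_add_sum_Ico _ (by omega : r + 1 ≤ min k l),
    hhead, hgeom, add_sub_add_right_eq_sub, ← sub_mul]
  exact mul_dvd_mul_right (dvd_sub_comm.1 (sub_dvd_dickF_sub Y (1 + Y) Z (r + 1))) _

theorem stmt2 (n k l : ℕ) (hn : 2 ≤ n) (hk1 : 1 ≤ k) (hkn : k ≤ n) (hl1 : 1 ≤ l) (hln : l ≤ n)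
    (h : n ≤ k + l - 1) (r : ℕ) (hr : r = k + l - 1 - n)
    (Y Z : MvPolynomial (Fin 2) ℤ) (hY : Y = MvPolynomial.X 0) (hZ : Z = MvPolynomial.X 1) :
    dickF Y Z k * dickF Y Z l -
        ((∑ t ∈ Finset.range (r + 1), Y ^ t * dickF Y Z n) +
          ∑ t ∈ Finset.Ico (r + 1) (min k l), Y ^ t * dickF Y Z (k + l - 1 - 2 * t)) ∈
      Ideal.span {(1 + Y - Z) * dickF Y Z n} :=
  stmt2_general n k l hk1 hkn hl1 hln h r hr Y Z
end

section
/- For every commutative ℚ-algebra R, all elements y, z ∈ R, and every integer s ≥ 1, one has z^s = Σ_{i=0}^{⌊s/2⌋} binomial(s, i) · (s+1−2i)/(s+1−i) · y^i · F_{s+1−2i}(y, z), where the rational number binomial(s,i)·(s+1−2i)/(s+1−i) acts on R via the ℚ-algebra structure. -/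
section Dickson

variable {R : Type*} [CommRing R] (y z : R)

@[simp] lemma dickF_zero : dickF y z 0 = 0 := rfl

@[simp] lemma dickF_one : dickF y z 1 = 1 := rfl

lemma mul_dickF_succ (n : ℕ) : z * dickF y z (n + 1) = dickF y z (n + 2) + y * dickF y z n := by
  rw [dickF]
  ring

end Dickson

def ballotCoeff (s : ℕ) : ℕ → ℤ
  | 0 => 1
  | i + 1 => s.choose (i + 1) - s.choose i

@[simp] lemma ballotCoeff_zero (s : ℕ) : ballotCoeff s 0 = 1 := rfl

lemma ballotCoeff_succ_succ (s i : ℕ) :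
    ballotCoeff (s + 1) (i + 1) = ballotCoeff s (i + 1) + ballotCoeff s i := by
  cases i with
  | zero => simp [ballotCoeff]
  | succ i => simp only [ballotCoeff, Nat.choose_succ_succ']; push_cast; ring

lemma ballotCoeff_eq_zero_of_two_mul_eq {s i : ℕ} (h : 2 * i = s + 1) : ballotCoeff s i = 0 := by
  obtain ⟨m, rfl, rfl⟩ : ∃ m, i = m + 1 ∧ s = 2 * m + 1 := ⟨i - 1, by omega, by omega⟩
  simp [ballotCoeff, Nat.choose_symm_half]

lemma ballotCoeff_eq_choose_mul_div {s i : ℕ} (h : 2 * i ≤ s + 1) :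
    (ballotCoeff s i : ℚ) = s.choose i * ((s + 1 - 2 * i : ℕ) : ℚ) / ((s + 1 - i : ℕ) : ℚ) := by
  have hpos : ((s + 1 - i : ℕ) : ℚ) ≠ 0 := by norm_cast; omega
  rw [eq_div_iff hpos]
  cases i with
  | zero => simp
  | succ k =>
    have hrec : (s.choose (k + 1) * (k + 1) : ℚ) = s.choose k * ((s - k : ℕ) : ℚ) := by
      exact_mod_cast Nat.choose_succ_right_eq s k
    simp only [ballotCoeff]
    push_cast [Nat.cast_sub (show 2 * (k + 1) ≤ s + 1 by omega),
      Nat.cast_sub (show k + 1 ≤ s + 1 by omega), Nat.cast_sub (show k ≤ s by omega)] at hrec ⊢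
    linear_combination hrec

section Expansion

variable {R : Type*} [CommRing R] (y z : R)

lemma mul_ballotCoeff_mul_dickF (s i : ℕ) :
    z * (ballotCoeff s i * y ^ i * dickF y z (s + 1 - 2 * i)) =
      ballotCoeff s i * y ^ i * dickF y z (s + 2 - 2 * i) +
        ballotCoeff s i * y ^ (i + 1) * dickF y z (s - 2 * i) := by
  rcases lt_trichotomy (2 * i) (s + 1) with h | h | h
  · obtain ⟨n, hn⟩ : ∃ n, s - 2 * i = n := ⟨_, rfl⟩
    rw [show s + 1 - 2 * i = n + 1 by omega, show s + 2 - 2 * i = n + 2 by omega, hn]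
    linear_combination (ballotCoeff s i * y ^ i : R) * mul_dickF_succ y z n
  · simp [ballotCoeff_eq_zero_of_two_mul_eq h]
  · rw [show s + 1 - 2 * i = 0 by omega, show s + 2 - 2 * i = 0 by omega,
      show s - 2 * i = 0 by omega]
    simp

-- The boundary term on the left vanishes for `n = s + 1`, where the index of `dickF` is `0`.
lemma mul_sum_ballotCoeff_add (s n : ℕ) :
    z * ∑ i ∈ Finset.range n, ballotCoeff s i * y ^ i * dickF y z (s + 1 - 2 * i) +
        ballotCoeff s n * y ^ n * dickF y z (s + 2 - 2 * n) =
      ∑ i ∈ Finset.range (n + 1), ballotCoeff (s + 1) i * y ^ i * dickF y z (s + 2 - 2 * i) := by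
  induction n with
  | zero => simp
  | succ n ih =>
    rw [Finset.sum_range_succ, mul_add, mul_ballotCoeff_mul_dickF, Finset.sum_range_succ _ (n + 1),
      ← ih, ballotCoeff_succ_succ, show s + 2 - 2 * (n + 1) = s - 2 * n by omega]
    push_cast
    ring

lemma pow_eq_sum_ballotCoeff (s : ℕ) :
    z ^ s = ∑ i ∈ Finset.range (s + 1), ballotCoeff s i * y ^ i * dickF y z (s + 1 - 2 * i) := by
  induction s with
  | zero => simp
  | succ s ih =>
    rw [pow_succ', ih, ← add_zero (z * _), ← mul_sum_ballotCoeff_add,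
      show s + 2 - 2 * (s + 1) = 0 by omega]
    simp

end Expansion

theorem stmt3_general {R : Type*} [CommRing R] [Algebra ℚ R] (y z : R) (s : ℕ) :
    z ^ s = ∑ i ∈ Finset.range (s / 2 + 1),
      algebraMap ℚ R ((Nat.choose s i : ℚ) * ((s + 1 - 2 * i : ℕ) : ℚ) / ((s + 1 - i : ℕ) : ℚ)) *
        y ^ i * dickF y z (s + 1 - 2 * i) := by
  have hsub : Finset.range (s / 2 + 1) ⊆ Finset.range (s + 1) :=
    Finset.range_subset_range.2 (by omega)
  have hvanish : ∀ i ∈ Finset.range (s + 1), i ∉ Finset.range (s / 2 + 1) →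
      (ballotCoeff s i : R) * y ^ i * dickF y z (s + 1 - 2 * i) = 0 := by
    intro i _ hi
    rw [Finset.mem_range] at hi
    rw [show s + 1 - 2 * i = 0 by omega, dickF_zero, mul_zero]
  rw [pow_eq_sum_ballotCoeff, ← Finset.sum_subset hsub hvanish]
  refine Finset.sum_congr rfl fun i hi => ?_
  rw [Finset.mem_range] at hi
  rw [← ballotCoeff_eq_choose_mul_div (by omega), map_intCast]

theorem stmt3 {R : Type*} [CommRing R] [Algebra ℚ R] (y z : R) (s : ℕ) (hs : 1 ≤ s) :
    z ^ s = ∑ i ∈ Finset.range (s / 2 + 1),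
      algebraMap ℚ R ((Nat.choose s i : ℚ) * ((s + 1 - 2 * i : ℕ) : ℚ) / ((s + 1 - i : ℕ) : ℚ)) *
        y ^ i * dickF y z (s + 1 - 2 * i) :=
  stmt3_general y z s
end

section
/- Let n ≥ 2 be an integer and let q, b ∈ ℂ satisfy b² = −q. Then the polynomial identity F_n(q, z) = ∏_{k=1}^{n−1} (z − 2·b·i·cos(kπ/n)) holds in the polynomial ring ℂ[z] (where F_n(q,z) is the Dickson polynomial evaluated at y = q with z a variable). Moreover, if q ≠ 0 then the n−1 complex numbers 2·b·i·cos(kπ/n), for 1 ≤ k ≤ n−1, are pairwise distinct; in particular F_n(q, ·) has exactly n−1 distinct complex roots, namely 2·b·i·cos(kπ/n) for 1 ≤ k ≤ n−1. -/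
/-!
Writing `y = αβ` and `z = α + β`, the recursion gives `(α - β) F_s(αβ, α + β) = α^s - β^s`.
With `c = b i`, so that `c² = q`, the choice `α = c e^{iθ}`, `β = c e^{-iθ}`, `θ = kπ/n`
makes `α + β = 2c cos θ`, `α^n = β^n` and, for `0 < k < n` and `c ≠ 0`, `α ≠ β`; hence the
`n - 1` numbers `2c cos(kπ/n)` are roots. They are distinct because `cos` is injective on
`[0, π]`, and `F_n(q, ·)` is monic of degree `n - 1`, so it is their product. For `q = 0`
both sides are `z^{n-1}`.
-/

open Polynomial Real

section CommRing

variable {R S : Type*} [CommRing R] [CommRing S]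

theorem map_dickF (f : R →+* S) (y z : R) :
    ∀ s, f (dickF y z s) = dickF (f y) (f z) s
  | 0 => by simp [dickF]
  | 1 => by simp [dickF]
  | s + 2 => by simp [dickF, map_dickF f y z (s + 1), map_dickF f y z s]

theorem eval_dickF_C_X (y x : R) (s : ℕ) : (dickF (C y) X s).eval x = dickF y x s := by
  simpa using map_dickF (evalRingHom x) (C y) X s

theorem dickF_zero_left (z : R) : ∀ s, dickF 0 z (s + 1) = z ^ s
  | 0 => by simp [dickF]
  | s + 1 => by rw [dickF, dickF_zero_left z s]; ring

theorem sub_mul_dickF (α β : R) :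
    ∀ s, (α - β) * dickF (α * β) (α + β) s = α ^ s - β ^ s
  | 0 => by simp [dickF]
  | 1 => by simp [dickF]
  | s + 2 => by
      rw [dickF]
      linear_combination (α + β) * sub_mul_dickF α β (s + 1) - α * β * sub_mul_dickF α β s

theorem dickF_eq_zero_of_pow_eq [IsDomain R] {α β : R} {s : ℕ} (hne : α ≠ β)
    (hpow : α ^ s = β ^ s) : dickF (α * β) (α + β) s = 0 := by
  have h := sub_mul_dickF α β s
  rw [hpow, sub_self] at h
  exact (mul_eq_zero.mp h).resolve_left (sub_ne_zero.mpr hne)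

theorem monic_dickF_C_X_and_natDegree_eq [Nontrivial R] (y : R) :
    ∀ s, (dickF (C y) X (s + 1)).Monic ∧ (dickF (C y) X (s + 1)).natDegree = s
  | 0 => by simp [dickF]
  | 1 => by simp [dickF]
  | s + 2 => by
      obtain ⟨hm₁, hd₁⟩ := monic_dickF_C_X_and_natDegree_eq y (s + 1)
      obtain ⟨-, hd₀⟩ := monic_dickF_C_X_and_natDegree_eq y s
      have hlead : (X * dickF (C y) X (s + 2)).natDegree = s + 2 := by
        rw [monic_X.natDegree_mul hm₁, natDegree_X, hd₁, add_comm]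
      have hlt : (C y * dickF (C y) X (s + 1)).natDegree < (X * dickF (C y) X (s + 2)).natDegree :=
        calc _ ≤ s := (natDegree_C_mul_le _ _).trans hd₀.le
          _ < _ := by omega
      rw [dickF]
      exact ⟨(monic_X.mul hm₁).sub_of_left (degree_lt_degree hlt),
        (natDegree_sub_eq_left_of_natDegree_lt hlt).trans hlead⟩

end CommRing

theorem Polynomial.Monic.eq_prod_X_sub_C_of_natDegree_eq_card {R : Type*} [CommRing R]
    [IsDomain R] {p : R[X]} (hp : p.Monic) {S : Finset R} (hS : ∀ a ∈ S, p.eval a = 0)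
    (hdeg : p.natDegree = S.card) : p = ∏ a ∈ S, (X - C a) := by
  have hroots := roots_eq_of_natDegree_le_card_of_ne_zero hS hdeg.le hp.ne_zero
  rw [← prod_multiset_X_sub_C_of_monic_of_roots_card_eq hp (by rw [hroots, hdeg]; rfl), hroots]
  rfl

theorem dickF_sq_two_mul_cos_eq_zero {c : ℂ} (hc : c ≠ 0) {n k : ℕ} (hk₀ : 0 < k)
    (hkn : k < n) : dickF (c ^ 2) (2 * c * (cos (k * π / n) : ℂ)) n = 0 := by
  have hk : (0 : ℝ) < k := by exact_mod_cast hk₀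
  have hn : (0 : ℝ) < n := by exact_mod_cast hk₀.trans hkn
  set θ : ℝ := k * π / n with hθ
  have hsin : sin θ ≠ 0 := by
    refine (sin_pos_of_pos_of_lt_pi (by positivity) ?_).ne'
    rw [hθ, div_lt_iff₀ hn]
    have : (k : ℝ) < n := by exact_mod_cast hkn
    nlinarith [pi_pos]
  set α := c * Complex.exp (θ * Complex.I)
  set β := c * Complex.exp (-θ * Complex.I)
  have hprod : α * β = c ^ 2 := by
    have : Complex.exp (θ * Complex.I) * Complex.exp (-θ * Complex.I) = 1 := by
      rw [← Complex.exp_add]; simp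
    linear_combination c ^ 2 * this
  have hsum : α + β = 2 * c * (cos θ : ℂ) := by
    rw [Complex.ofReal_cos]
    linear_combination -c * Complex.two_cos (θ : ℂ)
  have hne : α ≠ β := by
    have hdiff : α - β = c * (2 * Complex.sin θ) * Complex.I := by
      linear_combination (-c * Complex.I) * Complex.two_sin (θ : ℂ) +
        (α - β) * Complex.I_sq
    intro h
    rw [h, sub_self, eq_comm] at hdiff
    exact hsin (by exact_mod_cast (by simpa [hc] using hdiff : Complex.sin θ = 0))
  have hpow : α ^ n = β ^ n := by
    have hrot : α = β * Complex.exp (2 * θ * Complex.I) := by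
      simp only [α, β, mul_assoc, ← Complex.exp_add]; ring_nf
    have hn : (n : ℂ) ≠ 0 := by exact_mod_cast hn.ne'
    have hturn : (n : ℂ) * (2 * θ * Complex.I) = k * (2 * π * Complex.I) := by
      rw [hθ]; push_cast; field_simp
    rw [hrot, mul_pow, ← Complex.exp_nat_mul, hturn, Complex.exp_nat_mul_two_pi_mul_I, mul_one]
  rw [← hprod, ← hsum]
  exact dickF_eq_zero_of_pow_eq hne hpow

theorem injOn_cos_nat_mul_pi_div (n : ℕ) :
    Set.InjOn (fun k : ℕ => cos (k * π / n)) (Set.Iic n) := by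
  rcases eq_or_ne n 0 with rfl | hn
  · simp [Set.InjOn]
  refine injOn_cos.comp (fun k _ l _ h => ?_) fun k hk => ⟨by positivity, ?_⟩
  · field_simp at h
    exact_mod_cast h
  · rw [div_le_iff₀ (by positivity)]
    have : (k : ℝ) ≤ n := by exact_mod_cast hk
    nlinarith [pi_pos]

theorem injOn_two_mul_cos_nat_mul_pi_div {c : ℂ} (hc : c ≠ 0) (n : ℕ) :
    Set.InjOn (fun k : ℕ => 2 * c * (cos (k * π / n) : ℂ)) (Set.Iic n) :=
  ((mul_right_injective₀ (mul_ne_zero two_ne_zero hc)).comp Complex.ofReal_injective).comp_injOn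
    (injOn_cos_nat_mul_pi_div n)

theorem dickF_C_sq_X_eq_prod (c : ℂ) {n : ℕ} (hn : n ≠ 0) :
    dickF (C (c ^ 2)) X n =
      ∏ k ∈ Finset.Icc 1 (n - 1), (X - C (2 * c * (cos (k * π / n) : ℂ))) := by
  obtain ⟨m, rfl⟩ : ∃ m, n = m + 1 := ⟨n - 1, by omega⟩
  rcases eq_or_ne c 0 with rfl | hc
  · simp [dickF_zero_left]
  have hinj : Set.InjOn (fun k : ℕ => 2 * c * (cos (k * π / (m + 1 : ℕ)) : ℂ))
      (Finset.Icc 1 m) :=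
    (injOn_two_mul_cos_nat_mul_pi_div hc _).mono fun k hk =>
      (Finset.mem_Icc.mp hk).2.trans m.le_succ
  obtain ⟨hmonic, hdeg⟩ := monic_dickF_C_X_and_natDegree_eq (c ^ 2) m
  rw [add_tsub_cancel_right, ← Finset.prod_image (f := fun a => X - C a) hinj]
  refine hmonic.eq_prod_X_sub_C_of_natDegree_eq_card ?_ ?_
  · simp only [Finset.mem_image, Finset.mem_Icc, forall_exists_index, and_imp]
    rintro _ k hk₀ hkm rfl
    rw [eval_dickF_C_X]
    exact dickF_sq_two_mul_cos_eq_zero hc hk₀ (by omega)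
  · rw [Finset.card_image_of_injOn hinj, hdeg, Nat.card_Icc, add_tsub_cancel_right]

/-- The product identity for the Dickson polynomial `F_n(q, z)` in `ℂ[z]` where
`b² = -q`, together with the fact that for `q ≠ 0` its roots are exactly the
`n - 1` pairwise distinct numbers `2·b·i·cos(kπ/n)`, `1 ≤ k ≤ n-1`. -/
theorem stmt8 (n : ℕ) (hn : 2 ≤ n) (q b : ℂ) (hb : b ^ 2 = -q) :
    dickF (Polynomial.C q) Polynomial.X n =
      ∏ k ∈ Finset.Icc 1 (n - 1),
        (Polynomial.X - Polynomial.C (2 * b * Complex.I * (Real.cos (k * Real.pi / n) : ℂ))) ∧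
    (q ≠ 0 →
      (((Finset.Icc 1 (n - 1)).image
          fun k : ℕ => 2 * b * Complex.I * (Real.cos (k * Real.pi / n) : ℂ)).card = n - 1 ∧
        ∀ x : ℂ, Polynomial.eval x (dickF (Polynomial.C q) Polynomial.X n) = 0 ↔
          x ∈ (Finset.Icc 1 (n - 1)).image
            fun k : ℕ => 2 * b * Complex.I * (Real.cos (k * Real.pi / n) : ℂ))) := by
  obtain rfl : q = (b * Complex.I) ^ 2 := by rw [mul_pow, Complex.I_sq, hb]; ring
  simp only [mul_assoc 2 b Complex.I]
  generalize b * Complex.I = c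
  have hprod := dickF_C_sq_X_eq_prod c (n := n) (by omega)
  refine ⟨hprod, fun hc => ⟨?_, fun x => ?_⟩⟩
  · rw [Finset.card_image_of_injOn, Nat.card_Icc, add_tsub_cancel_right]
    exact (injOn_two_mul_cos_nat_mul_pi_div (by simpa using hc) n).mono fun k hk =>
      (Finset.mem_Icc.mp hk).2.trans (n.sub_le 1)
  · rw [hprod, eval_prod, Finset.prod_eq_zero_iff]
    simp only [eval_sub, eval_X, eval_C, sub_eq_zero, Finset.mem_image, eq_comm (a := x)]
end

section
/- Let n ≥ 2 be an integer, let l be a positive multiple of n, let ω ∈ ℂ be a primitive l-th root of unity, and let t be an integer with 1 ≤ t ≤ l−1. Then ω^t + 1 is a root of the polynomial F_n(ω^t, z) ∈ ℂ[z] if and only if (l/n) divides t. -/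
/-!
Evaluated at `z = y + 1`, the Dickson recurrence telescopes to
`(y - 1) * F_s(y, y + 1) = y ^ s - 1`. Since `ω ^ t ≠ 1` for `0 < t < l`, the point `ω ^ t + 1`
is a root of `F_n(ω ^ t, z)` exactly when `ω ^ (t * n) = 1`, i.e. when `l ∣ t * n`, i.e. when
`l / n ∣ t`.
-/

theorem Polynomial.eval_dickF {R : Type*} [CommRing R] (y a : R) :
    ∀ s, (dickF (C y) X s).eval a = dickF y a s
  | 0 => by simp [dickF]
  | 1 => by simp [dickF]
  | s + 2 => by simp [dickF, eval_dickF y a s, eval_dickF y a (s + 1)]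

theorem sub_one_mul_dickF_add_one {R : Type*} [CommRing R] (y : R) :
    ∀ s, (y - 1) * dickF y (y + 1) s = y ^ s - 1
  | 0 => by simp [dickF]
  | 1 => by simp [dickF]
  | s + 2 => by
      rw [dickF]
      linear_combination (y + 1) * sub_one_mul_dickF_add_one y (s + 1) -
        y * sub_one_mul_dickF_add_one y s

theorem dickF_add_one_eq_zero_iff {R : Type*} [CommRing R] [NoZeroDivisors R] {y : R}
    (hy : y ≠ 1) (s : ℕ) : dickF y (y + 1) s = 0 ↔ y ^ s = 1 := by
  rw [← sub_eq_zero (a := y ^ s), ← sub_one_mul_dickF_add_one, mul_eq_zero,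
    or_iff_right (sub_ne_zero.2 hy)]

theorem IsPrimitiveRoot.pow_pow_eq_one_iff_div_dvd {M : Type*} [CommMonoid M] {ω : M} {l n : ℕ}
    (hω : IsPrimitiveRoot ω l) (hn : 0 < n) (hnl : n ∣ l) (t : ℕ) :
    (ω ^ t) ^ n = 1 ↔ l / n ∣ t := by
  rw [← pow_mul, hω.pow_eq_one_iff_dvd, Nat.div_dvd_iff_dvd_mul hnl hn, mul_comm]

theorem stmt10_general (n l t : ℕ) (hn : 2 ≤ n) (hnl : n ∣ l) (ω : ℂ)
    (hω : IsPrimitiveRoot ω l) (ht1 : 1 ≤ t) (ht2 : t ≤ l - 1) :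
    (dickF (Polynomial.C (ω ^ t)) Polynomial.X n).IsRoot (ω ^ t + 1) ↔ (l / n) ∣ t := by
  have hωt : ω ^ t ≠ 1 := hω.pow_ne_one_of_pos_of_lt (by omega) (by omega)
  rw [Polynomial.IsRoot.def, Polynomial.eval_dickF, dickF_add_one_eq_zero_iff hωt,
    hω.pow_pow_eq_one_iff_div_dvd (by omega) hnl]

theorem stmt10 (n l t : ℕ) (hn : 2 ≤ n) (hl : 0 < l) (hnl : n ∣ l) (ω : ℂ)
    (hω : IsPrimitiveRoot ω l) (ht1 : 1 ≤ t) (ht2 : t ≤ l - 1) :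
    (dickF (Polynomial.C (ω ^ t)) Polynomial.X n).IsRoot (ω ^ t + 1) ↔ (l / n) ∣ t :=
  stmt10_general n l t hn hnl ω hω ht1 ht2
end

section
/- Let s ≥ 3 be an odd integer, let D = DihedralGroup(2s) (order 4s), and let θ = exp(πi/s). For every j ∈ {0,1} and every integer l with 1 ≤ l ≤ s−1, the tensor product representation F(1,j) ⊗ V(l) of D is isomorphic to V(s−l), i.e., there is a ℂ-linear equivalence ℂ ⊗ ℂ² ≃ ℂ² commuting with the actions of D. -/
open scoped TensorProduct

/-- `θ = exp(πi/s)`, a primitive `2s`-th root of unity. -/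
noncomputable def theta (s : ℕ) : ℂ := Complex.exp (Real.pi * Complex.I / s)

/-- The 2-dimensional representation `V(l)` of the dihedral group of order `4s`:
`r k` acts by `diag(θ^{lk}, θ^{-lk})` and `sr k` acts by the anti-diagonal matrix
with top-right entry `θ^{-lk}` and bottom-left entry `θ^{lk}`. -/
noncomputable def Vrep (s : ℕ) (l : ℤ) :
    DihedralGroup (2 * s) → ((Fin 2 → ℂ) →ₗ[ℂ] (Fin 2 → ℂ))
  | DihedralGroup.r k => Matrix.toLin'
      !![theta s ^ (l * (k.val : ℤ)), 0; 0, theta s ^ (-(l * (k.val : ℤ)))]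
  | DihedralGroup.sr k => Matrix.toLin'
      !![0, theta s ^ (-(l * (k.val : ℤ))); theta s ^ (l * (k.val : ℤ)), 0]

/-- The 1-dimensional representation `F(i,j)` of the dihedral group of order `4s`:
`r k` acts by `(-1)^{ik}` and `sr k` acts by `(-1)^{ik+j}`. -/
noncomputable def Frep (s : ℕ) (i j : ℕ) : DihedralGroup (2 * s) → (ℂ →ₗ[ℂ] ℂ)
  | DihedralGroup.r k => ((-1 : ℂ) ^ (i * k.val)) • LinearMap.id
  | DihedralGroup.sr k => ((-1 : ℂ) ^ (i * k.val + j)) • LinearMap.id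

/-!
Since `θ ^ s = -1`, the matrices of `V(s - l)` are those of `V(l)` with the two coordinates
swapped and multiplied by the sign `(-1) ^ k` of `F(1,0)`. Twisting the swap by `(-1) ^ j`
accounts for the extra sign of `F(1,j)` on reflections, so `x ⊗ (a, b) ↦ x • (b, (-1) ^ j a)`
is the required isomorphism.
-/

lemma theta_ne_zero (s : ℕ) : theta s ≠ 0 := Complex.exp_ne_zero _

lemma theta_zpow_natCast_self {s : ℕ} (hs : s ≠ 0) : theta s ^ (s : ℤ) = -1 := by
  rw [zpow_natCast, theta, ← Complex.exp_nat_mul,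
    mul_div_cancel₀ _ (Nat.cast_ne_zero.mpr hs), Complex.exp_pi_mul_I]

lemma theta_zpow_sub_mul {s : ℕ} (hs : s ≠ 0) (l : ℤ) (n : ℕ) :
    theta s ^ (((s : ℤ) - l) * n) = (-1) ^ n * theta s ^ (-(l * n)) := by
  rw [show ((s : ℤ) - l) * n = s * n + -(l * n) by ring, zpow_add₀ (theta_ne_zero s),
    zpow_mul, theta_zpow_natCast_self hs, zpow_natCast]

lemma theta_zpow_neg_sub_mul {s : ℕ} (hs : s ≠ 0) (l : ℤ) (n : ℕ) :
    theta s ^ (-(((s : ℤ) - l) * n)) = (-1) ^ n * theta s ^ (l * n) := by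
  rw [show -(((s : ℤ) - l) * n) = s * -(n : ℤ) + l * n by ring, zpow_add₀ (theta_ne_zero s),
    zpow_mul, theta_zpow_natCast_self hs, zpow_neg, zpow_natCast, ← inv_pow, inv_neg, inv_one]

lemma TensorProduct.lid_map {R M N : Type*} [CommSemiring R] [AddCommMonoid M] [Module R M]
    [AddCommMonoid N] [Module R N] (f : R →ₗ[R] R) (g : M →ₗ[R] N) (v : R ⊗[R] M) :
    TensorProduct.lid R N (TensorProduct.map f g v) = f 1 • g (TensorProduct.lid R M v) := by
  induction v using TensorProduct.induction_on with
  | zero => simp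
  | add x y hx hy => simp only [map_add, hx, hy, smul_add]
  | tmul r m =>
    have hr : f r = r * f 1 := by rw [← smul_eq_mul, ← map_smul, smul_eq_mul, mul_one]
    rw [TensorProduct.map_tmul, TensorProduct.lid_tmul, TensorProduct.lid_tmul, map_smul, hr,
      smul_smul, mul_comm]

def twistedSwap (c : ℂ) (hc : c * c = 1) : (Fin 2 → ℂ) ≃ₗ[ℂ] (Fin 2 → ℂ) :=
  LinearEquiv.ofLinearMap (Matrix.toLin' !![0, 1; c, 0]) (Matrix.toLin' !![0, c; 1, 0])
    (by rw [← Matrix.toLin'_mul, Matrix.mul_fin_two, hc]; simp [← Matrix.one_fin_two])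
    (by rw [← Matrix.toLin'_mul, Matrix.mul_fin_two, hc]; simp [← Matrix.one_fin_two])

lemma twistedSwap_apply (c : ℂ) (hc : c * c = 1) (v : Fin 2 → ℂ) :
    twistedSwap c hc v = ![v 1, c * v 0] := by
  ext i
  fin_cases i <;>
    simp [twistedSwap, Matrix.toLin'_apply, Matrix.mulVec, dotProduct, Fin.sum_univ_two]

lemma neg_one_pow_mul_self (j : ℕ) : (-1 : ℂ) ^ j * (-1) ^ j = 1 := by
  rw [← mul_pow, neg_one_mul, neg_neg, one_pow]

lemma twistedSwap_intertwines {s : ℕ} (hs : s ≠ 0) (j : ℕ) (l : ℤ) (g : DihedralGroup (2 * s))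
    (v : Fin 2 → ℂ) :
    twistedSwap _ (neg_one_pow_mul_self j) (Frep s 1 j g 1 • Vrep s l g v) =
      Vrep s (s - l) g (twistedSwap _ (neg_one_pow_mul_self j) v) := by
  ext i
  cases g <;> fin_cases i <;>
    simp [twistedSwap_apply, Frep, Vrep, Matrix.toLin'_apply, Matrix.mulVec, dotProduct,
      theta_zpow_sub_mul hs, theta_zpow_neg_sub_mul hs, pow_add] <;> ring_nf
  -- only the reflection case survives, with a leftover factor `(-1) ^ (j * 2)`
  simp only [pow_mul', neg_one_sq, one_pow, mul_one]

theorem stmt11_general (s : ℕ) (hodd : Odd s) (j : ℕ) (l : ℤ) :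
    ∃ e : (ℂ ⊗[ℂ] (Fin 2 → ℂ)) ≃ₗ[ℂ] (Fin 2 → ℂ),
      ∀ (g : DihedralGroup (2 * s)) (v : ℂ ⊗[ℂ] (Fin 2 → ℂ)),
        e (TensorProduct.map (Frep s 1 j g) (Vrep s l g) v) = Vrep s ((s : ℤ) - l) g (e v) := by
  refine ⟨(TensorProduct.lid ℂ _).trans (twistedSwap _ (neg_one_pow_mul_self j)), fun g v => ?_⟩
  rw [LinearEquiv.trans_apply, LinearEquiv.trans_apply, TensorProduct.lid_map]
  exact twistedSwap_intertwines hodd.pos.ne' j l g _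

/-- For odd `s ≥ 3`, `F(1,j) ⊗ V(l) ≅ V(s-l)` as representations of `DihedralGroup (2s)`. -/
theorem stmt11 (s : ℕ) (hs : 3 ≤ s) (hodd : Odd s) (j : ℕ) (hj : j ≤ 1)
    (l : ℤ) (hl1 : 1 ≤ l) (hl2 : l ≤ (s : ℤ) - 1) :
    ∃ e : (ℂ ⊗[ℂ] (Fin 2 → ℂ)) ≃ₗ[ℂ] (Fin 2 → ℂ),
      ∀ (g : DihedralGroup (2 * s)) (v : ℂ ⊗[ℂ] (Fin 2 → ℂ)),
        e (TensorProduct.map (Frep s 1 j g) (Vrep s l g) v) = Vrep s ((s : ℤ) - l) g (e v) :=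
  stmt11_general s hodd j l
end
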